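/- arXiv:1404.5177 — 3 statements merged into one kernel-verified Lean document; each statement's English description precedes it below -/
import Mathlib

section
/- Let R = k[x,y] with Poisson bracket {f,g} = (∂f/∂x ∂g/∂y − ∂f/∂y ∂g/∂x)h for a fixed h ∈ k[x,y], char k = 0. If the modular derivation φ (given by φ(f) = ∂{f,x}/∂x + ∂{f,y}/∂y) is a Hamiltonian derivation, i.e. φ = {g,-} for some g ∈ R, then h is a constant in k. -/
/-!
Testing φ on the coordinate functions gives `∂ₓh = -(∂ₓg) h` and `∂_y h = -(∂_y g) h`, so `h`
divides both of its partial derivatives. Differentiating in `xᵢ` lowers the degree in `xᵢ`,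
while a nonzero multiple of `h` has at least the degree of `h`; hence both partials vanish, and in
characteristic zero `h` is constant.
-/

open MvPolynomial

namespace MvPolynomial

variable {R σ : Type*}

lemma degreeOf_pderiv_lt [CommSemiring R] {p : MvPolynomial σ R} {i : σ}
    (hp : pderiv i p ≠ 0) : degreeOf i (pderiv i p) < degreeOf i p := by
  classical
  have hlt : ∀ m ∈ (pderiv i p).support, m i < degreeOf i p := by
    intro m hm
    rw [mem_support_iff, coeff_pderiv] at hm
    have hmem : m + Finsupp.single i 1 ∈ p.support :=
      mem_support_iff.mpr (left_ne_zero_of_mul hm)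
    simpa using monomial_le_degreeOf i hmem
  obtain ⟨m, hm⟩ := support_nonempty.mpr hp
  exact (degreeOf_lt_iff (Nat.zero_lt_of_lt (hlt m hm))).mpr hlt

lemma pderiv_eq_zero_of_dvd_pderiv [CommRing R] [IsDomain R] {p : MvPolynomial σ R} {i : σ}
    (hdvd : p ∣ pderiv i p) : pderiv i p = 0 := by
  by_contra hne
  obtain ⟨q, hq⟩ := hdvd
  have hp : p ≠ 0 := by rintro rfl; simp at hne
  have hq0 : q ≠ 0 := by rintro rfl; simp [hq] at hne
  have hlt := degreeOf_pderiv_lt hne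
  rw [hq, degreeOf_mul_eq hp hq0] at hlt
  omega

lemma eq_C_of_forall_pderiv_eq_zero [CommSemiring R] [NoZeroDivisors R] [CharZero R]
    {p : MvPolynomial σ R} (hp : ∀ i, pderiv i p = 0) : p = C (coeff 0 p) := by
  classical
  ext m
  rw [coeff_C]
  split_ifs with hm
  · rw [hm]
  obtain ⟨i, hi⟩ : ∃ i, m i ≠ 0 := by
    by_contra! h
    exact hm (Finsupp.ext fun i => (h i).symm)
  have hsplit : m - Finsupp.single i 1 + Finsupp.single i 1 = m :=
    tsub_add_cancel_of_le (Finsupp.single_le_iff.mpr (Nat.one_le_iff_ne_zero.mpr hi))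
  have hcoeff := coeff_pderiv (i := i) p (m - Finsupp.single i 1)
  rw [hp i, coeff_zero, hsplit] at hcoeff
  exact (mul_eq_zero.mp hcoeff.symm).resolve_right (Nat.cast_add_one_ne_zero _)

lemma eq_C_of_forall_dvd_pderiv [CommRing R] [IsDomain R] [CharZero R]
    {p : MvPolynomial σ R} (hp : ∀ i, p ∣ pderiv i p) : p = C (coeff 0 p) :=
  eq_C_of_forall_pderiv_eq_zero fun i => pderiv_eq_zero_of_dvd_pderiv (hp i)

end MvPolynomial

/-- On R = k[x,y] with bracket {f,g} = (∂_x f ∂_y g − ∂_y f ∂_x g)·h,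
if the modular derivation φ(f) = ∂{f,x}/∂x + ∂{f,y}/∂y is Hamiltonian,
i.e. φ = {g,−} for some g, then h is a constant. -/
theorem modular_hamiltonian_two_vars_implies_constant
    {k : Type*} [Field k] [CharZero k] (h g : MvPolynomial (Fin 2) k)
    (br : MvPolynomial (Fin 2) k → MvPolynomial (Fin 2) k → MvPolynomial (Fin 2) k)
    (hbr : ∀ f f', br f f' =
      (pderiv 0 f * pderiv 1 f' - pderiv 1 f * pderiv 0 f') * h)
    (hham : ∀ f : MvPolynomial (Fin 2) k,
      pderiv 0 (br f (X 0)) + pderiv 1 (br f (X 1)) = br g f) :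
    ∃ c : k, h = C c := by
  have hx : -pderiv 0 h = pderiv 0 g * h := by
    simpa [hbr, pderiv_X] using hham (X 1)
  have hy : pderiv 1 h = -pderiv 1 g * h := by
    simpa [hbr, pderiv_X] using hham (X 0)
  exact ⟨_, eq_C_of_forall_dvd_pderiv <|
    Fin.forall_fin_two.mpr ⟨dvd_neg.mp (Dvd.intro_left _ hx.symm), Dvd.intro_left _ hy.symm⟩⟩
end

section
/- Let R = k[x_1,…,x_n] be a polynomial Poisson algebra (char k = 0). The modular derivation φ(f) = Σ_j ∂{f,x_j}/∂x_j is a Poisson derivation: it is a k-derivation of R and satisfies φ({f,g}) = {φ(f),g} + {f,φ(g)} for all f,g ∈ R. -/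
/-! The bracket is a derivation in its second argument, so `{a, h} = Σ_j ∂_j h · {a, x_j}`;
hence `∂_j` commutes with `{a, -}` up to the correction `Σ_i ∂_i h · ∂_j {a, x_i}`.
By Jacobi, `φ {f, g} = Σ_j ∂_j ({f, {g, x_j}} - {g, {f, x_j}})`, and moving `∂_j` inside
the brackets gives `{f, φ g} - {g, φ f}` plus the corrections
`Σ_{i,j} ∂_i {g, x_j} · ∂_j {f, x_i}` and its mirror image, which agree after exchanging
`i` and `j`. The Leibniz rule for `φ` is similar: the extra terms `{f, g} + {g, f}` cancel
by skew-symmetry. -/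

open MvPolynomial

theorem Derivation.finset_sum_apply {R A M ι : Type*} [CommSemiring R] [CommSemiring A]
    [AddCommMonoid M] [Algebra R A] [Module A M] [Module R M] (s : Finset ι)
    (D : ι → Derivation R A M) (a : A) : (∑ i ∈ s, D i) a = ∑ i ∈ s, D i a := by
  simp [← Derivation.coeFnAddMonoidHom_apply]

namespace MvPolynomial

variable {σ R : Type*} [CommRing R]

theorem pderiv_pderiv_comm (i j : σ) (p : MvPolynomial σ R) :
    pderiv i (pderiv j p) = pderiv j (pderiv i p) := by
  classical
  have h : ⁅pderiv i, pderiv j⁆ = (0 : Derivation R (MvPolynomial σ R) (MvPolynomial σ R)) :=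
    derivation_ext fun k => by
      rw [Derivation.commutator_apply, pderiv_X, pderiv_X]
      simp [Pi.single_apply, apply_ite]
  rw [← sub_eq_zero, ← Derivation.commutator_apply, h, Derivation.zero_apply]

section PoissonBracket

variable (br : MvPolynomial σ R →ₗ[R] MvPolynomial σ R →ₗ[R] MvPolynomial σ R)

noncomputable def hamiltonianDerivation
    (hleib : ∀ a b c, br a (b * c) = br a b * c + b * br a c) (a : MvPolynomial σ R) :
    Derivation R (MvPolynomial σ R) (MvPolynomial σ R) :=
  Derivation.mk' (br a) fun b c => by rw [hleib, smul_eq_mul, smul_eq_mul]; ring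

theorem bracket_eq_sum_pderiv_mul [Fintype σ]
    (hleib : ∀ a b c, br a (b * c) = br a b * c + b * br a c) (a h : MvPolynomial σ R) :
    br a h = ∑ j, pderiv j h * br a (X j) := by
  classical
  have hD : hamiltonianDerivation br hleib a = ∑ j, br a (X j) • pderiv j :=
    derivation_ext fun i => by
      simp [hamiltonianDerivation, Derivation.finset_sum_apply, pderiv_X, Pi.single_apply]
  simpa [hamiltonianDerivation, Derivation.finset_sum_apply, mul_comm] using congr($hD h)

theorem bracket_mul_left (hskew : ∀ a b, br a b = - br b a)
    (hleib : ∀ a b c, br a (b * c) = br a b * c + b * br a c) (f g c : MvPolynomial σ R) :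
    br (f * g) c = br f c * g + f * br g c := by
  rw [hskew (f * g), hleib, hskew c f, hskew c g]
  ring

theorem bracket_bracket_left (hskew : ∀ a b, br a b = - br b a)
    (hjac : ∀ a b c, br a (br b c) + br b (br c a) + br c (br a b) = 0)
    (f g c : MvPolynomial σ R) :
    br (br f g) c = br f (br g c) - br g (br f c) := by
  have h := hjac f g c
  rw [hskew c f, map_neg] at h
  rw [hskew (br f g) c]
  linear_combination -h

theorem pderiv_bracket_sub_bracket_pderiv [Fintype σ]
    (hleib : ∀ a b c, br a (b * c) = br a b * c + b * br a c) (i : σ) (a h : MvPolynomial σ R) :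
    pderiv i (br a h) - br a (pderiv i h) = ∑ j, pderiv j h * pderiv i (br a (X j)) := by
  rw [bracket_eq_sum_pderiv_mul br hleib a h, bracket_eq_sum_pderiv_mul br hleib a (pderiv i h),
    map_sum, ← Finset.sum_sub_distrib]
  refine Finset.sum_congr rfl fun j _ => ?_
  rw [pderiv_mul, pderiv_pderiv_comm i j]
  ring

noncomputable def modularDerivation [Fintype σ] : MvPolynomial σ R →ₗ[R] MvPolynomial σ R :=
  ∑ j, (pderiv j).toLinearMap ∘ₗ br.flip (X j)

theorem modularDerivation_apply [Fintype σ] (f : MvPolynomial σ R) :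
    modularDerivation br f = ∑ j, pderiv j (br f (X j)) := by
  simp [modularDerivation]

theorem modularDerivation_mul [Fintype σ] (hskew : ∀ a b, br a b = - br b a)
    (hleib : ∀ a b c, br a (b * c) = br a b * c + b * br a c) (f g : MvPolynomial σ R) :
    modularDerivation br (f * g) = f * modularDerivation br g + g * modularDerivation br f := by
  have expand : ∀ a b, ∑ j, br a (X j) * pderiv j b = br a b := fun a b => by
    simp_rw [bracket_eq_sum_pderiv_mul br hleib a b, mul_comm]
  calc modularDerivation br (f * g)
      = ∑ j, (g * pderiv j (br f (X j)) + f * pderiv j (br g (X j))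
          + (br f (X j) * pderiv j g + br g (X j) * pderiv j f)) := by
        simp only [modularDerivation_apply, bracket_mul_left br hskew hleib, map_add, pderiv_mul]
        exact Finset.sum_congr rfl fun j _ => by ring
    _ = g * modularDerivation br f + f * modularDerivation br g + (br f g + br g f) := by
        simp only [Finset.sum_add_distrib, ← Finset.mul_sum, expand, modularDerivation_apply]
    _ = f * modularDerivation br g + g * modularDerivation br f := by
        rw [hskew g f]
        ring

theorem modularDerivation_bracket [Fintype σ] (hskew : ∀ a b, br a b = - br b a)
    (hjac : ∀ a b c, br a (br b c) + br b (br c a) + br c (br a b) = 0)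
    (hleib : ∀ a b c, br a (b * c) = br a b * c + b * br a c) (f g : MvPolynomial σ R) :
    modularDerivation br (br f g) =
      br (modularDerivation br f) g + br f (modularDerivation br g) := by
  set S : MvPolynomial σ R → MvPolynomial σ R → MvPolynomial σ R :=
    fun a b => ∑ j, ∑ i, pderiv i (br b (X j)) * pderiv j (br a (X i)) with hS
  have pderiv_sum_bracket : ∀ a b,
      ∑ j, pderiv j (br a (br b (X j))) = br a (modularDerivation br b) + S a b := fun a b => by
    rw [modularDerivation_apply, map_sum, ← Finset.sum_add_distrib]
    refine Finset.sum_congr rfl fun j _ => ?_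
    rw [← pderiv_bracket_sub_bracket_pderiv br hleib]
    ring
  have hS_comm : S f g = S g f := by
    simp only [hS]
    rw [Finset.sum_comm]
    simp_rw [mul_comm]
  calc modularDerivation br (br f g)
      = ∑ j, pderiv j (br f (br g (X j))) - ∑ j, pderiv j (br g (br f (X j))) := by
        simp only [modularDerivation_apply, bracket_bracket_left br hskew hjac, map_sub,
          Finset.sum_sub_distrib]
    _ = br f (modularDerivation br g) + S f g - (br g (modularDerivation br f) + S g f) := by
        rw [pderiv_sum_bracket, pderiv_sum_bracket]
    _ = br (modularDerivation br f) g + br f (modularDerivation br g) := by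
        rw [hS_comm, hskew g]
        ring

end PoissonBracket

end MvPolynomial

theorem modular_derivation_is_poisson_derivation_general
    {k : Type*} [Field k] (n : ℕ)
    (br : MvPolynomial (Fin n) k →ₗ[k] MvPolynomial (Fin n) k →ₗ[k] MvPolynomial (Fin n) k)
    (hskew : ∀ a b, br a b = - br b a)
    (hjac : ∀ a b c, br a (br b c) + br b (br c a) + br c (br a b) = 0)
    (hleib : ∀ a b c, br a (b * c) = br a b * c + b * br a c)
    (φ : MvPolynomial (Fin n) k → MvPolynomial (Fin n) k)
    (hφ : ∀ f, φ f = ∑ j : Fin n, pderiv j (br f (X j))) :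
    (∀ f g, φ (f + g) = φ f + φ g) ∧
    (∀ (c : k) f, φ (c • f) = c • φ f) ∧
    (∀ f g, φ (f * g) = f * φ g + g * φ f) ∧
    (∀ f g, φ (br f g) = br (φ f) g + br f (φ g)) := by
  obtain rfl : φ = ⇑(modularDerivation br) :=
    funext fun f => by rw [hφ, modularDerivation_apply]
  exact ⟨map_add _, map_smul _, modularDerivation_mul br hskew hleib,
    modularDerivation_bracket br hskew hjac hleib⟩

/-- For a polynomial Poisson algebra R = k[x_1,…,x_n], the modular
derivation φ(f) = Σ_j ∂{f,x_j}/∂x_j is a Poisson derivation. -/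
theorem modular_derivation_is_poisson_derivation
    {k : Type*} [Field k] [CharZero k] (n : ℕ)
    (br : MvPolynomial (Fin n) k →ₗ[k] MvPolynomial (Fin n) k →ₗ[k] MvPolynomial (Fin n) k)
    (hskew : ∀ a b, br a b = - br b a)
    (hjac : ∀ a b c, br a (br b c) + br b (br c a) + br c (br a b) = 0)
    (hleib : ∀ a b c, br a (b * c) = br a b * c + b * br a c)
    (φ : MvPolynomial (Fin n) k → MvPolynomial (Fin n) k)
    (hφ : ∀ f, φ f = ∑ j : Fin n, pderiv j (br f (X j))) :
    (∀ f g, φ (f + g) = φ f + φ g) ∧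
    (∀ (c : k) f, φ (c • f) = c • φ f) ∧
    (∀ f g, φ (f * g) = f * φ g + g * φ f) ∧
    (∀ f g, φ (br f g) = br (φ f) g + br f (φ g)) :=
  modular_derivation_is_poisson_derivation_general n br hskew hjac hleib φ hφ
end

section
/- Let R = k[x,y,z] with the Poisson structure {x,y}=0, {y,z}=y, {z,x}=−1 (char k = 0). If f ∈ k[x,y] (i.e. ∂f/∂z = 0) satisfies ∂f/∂x + y·∂f/∂y + f = 0, then f = 0. Consequently the third Poisson homology PH_3(R,R), which equals the kernel of the boundary map ∂ : Ω^3(R) → Ω^2(R) and is isomorphic to {f ∈ R : ∂f/∂z = 0 and ∂f/∂x + y ∂f/∂y + f = 0}, is zero. -/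
/-!
Comparing coefficients of `x^a y^b z^c` in `∂f/∂x + y ∂f/∂y + f = 0` gives
`(a + 1) f_{(a+1,b,c)} + (b + 1) f_{(a,b,c)} = 0`. In characteristic zero a nonzero coefficient
therefore forces a nonzero coefficient one power of `x` higher, so a nonzero solution would have
infinite support.
-/

open MvPolynomial

namespace MvPolynomial

variable {σ R : Type*} [CommRing R]

theorem coeff_X_mul_pderiv (j : σ) (f : MvPolynomial σ R) (m : σ →₀ ℕ) :
    coeff m (X j * pderiv j f) = m j * coeff m f := by
  classical
  rw [coeff_X_mul']
  split_ifs with hm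
  · have hle : Finsupp.single j 1 ≤ m := Finsupp.single_le_iff.mpr (Nat.one_le_iff_ne_zero.mpr
      (Finsupp.mem_support_iff.mp hm))
    rw [coeff_pderiv, tsub_add_cancel_of_le hle, Finsupp.tsub_apply, Finsupp.single_eq_same,
      Nat.cast_sub (Finsupp.single_le_iff.mp hle), mul_comm]
    ring
  · rw [Finsupp.notMem_support_iff.mp hm, Nat.cast_zero, zero_mul]

theorem coeff_pderiv_add_X_mul_pderiv_add_self (i j : σ) (f : MvPolynomial σ R)
    (m : σ →₀ ℕ) :
    coeff m (pderiv i f + X j * pderiv j f + f) =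
      (m i + 1) * coeff (m + Finsupp.single i 1) f + (m j + 1) * coeff m f := by
  rw [coeff_add, coeff_add, coeff_pderiv, coeff_X_mul_pderiv]
  ring

variable [NoZeroDivisors R] [CharZero R]

theorem coeff_add_single_ne_zero_of_pderiv_add_X_mul_pderiv_add_self_eq_zero {i j : σ}
    {f : MvPolynomial σ R} (hf : pderiv i f + X j * pderiv j f + f = 0) {m : σ →₀ ℕ}
    (hm : coeff m f ≠ 0) : coeff (m + Finsupp.single i 1) f ≠ 0 := by
  intro h
  have := coeff_pderiv_add_X_mul_pderiv_add_self i j f m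
  rw [hf, h, coeff_zero, mul_zero, zero_add, eq_comm] at this
  exact hm ((mul_eq_zero.mp this).resolve_left (Nat.cast_add_one_ne_zero _))

theorem eq_zero_of_pderiv_add_X_mul_pderiv_add_self_eq_zero {i j : σ}
    {f : MvPolynomial σ R} (hf : pderiv i f + X j * pderiv j f + f = 0) : f = 0 := by
  by_contra hne
  obtain ⟨m, hm⟩ := exists_coeff_ne_zero hne
  have hmem : ∀ n : ℕ, m + n • Finsupp.single i 1 ∈ (f.support : Set (σ →₀ ℕ)) := by
    intro n
    induction n with
    | zero => simpa using hm
    | succ n ih =>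
      rw [succ_nsmul, ← add_assoc]
      exact mem_support_iff.mpr
        (coeff_add_single_ne_zero_of_pderiv_add_X_mul_pderiv_add_self_eq_zero hf
          (mem_support_iff.mp ih))
  have hinj : Function.Injective fun n : ℕ => m + n • Finsupp.single i 1 := by
    intro a b hab
    simpa using congrArg (· i) hab
  exact Set.infinite_of_injective_forall_mem hinj hmem f.support.finite_toSet

end MvPolynomial

/-- On R = k[x,y,z], if ∂f/∂z = 0 and ∂f/∂x + y·∂f/∂y + f = 0
then f = 0; consequently PH_3(R,R) ≅ {f : ∂f/∂z = 0, ∂f/∂x + y ∂f/∂y + f = 0}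
is zero for the Poisson structure {x,y}=0, {y,z}=y, {z,x}=−1. -/
theorem third_poisson_homology_vanishes
    {k : Type*} [Field k] [CharZero k] :
    (∀ f : MvPolynomial (Fin 3) k, pderiv 2 f = 0 →
        pderiv 0 f + X 1 * pderiv 1 f + f = 0 → f = 0) ∧
    {f : MvPolynomial (Fin 3) k |
        pderiv 2 f = 0 ∧ pderiv 0 f + X 1 * pderiv 1 f + f = 0} = {0} := by
  have vanish : ∀ f : MvPolynomial (Fin 3) k, pderiv 2 f = 0 →
      pderiv 0 f + X 1 * pderiv 1 f + f = 0 → f = 0 :=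
    fun _ _ hf => eq_zero_of_pderiv_add_X_mul_pderiv_add_self_eq_zero hf
  refine ⟨vanish, Set.eq_singleton_iff_unique_mem.mpr ⟨by simp, ?_⟩⟩
  rintro f ⟨hz, hf⟩
  exact vanish f hz hf
end
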